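/- With g_λ(w) = w·exp(2πi M_λ(w)), M_λ(w) = −(w−1)/((λ+πi)w−(λ−πi)), λ ∉ {±πi}: for each integer σ with 1 + (λ+πi)σ ≠ 0, the point w_σ* = (1 + (λ−πi)σ)/(1 + (λ+πi)σ) satisfies M_λ(w_σ*) = σ, hence g_λ(w_σ*) = w_σ*, and the multiplier is g_λ'(w_σ*) = 1 − (1 + (λ−πi)σ)(1 + (λ+πi)σ). -/

import Mathlib

/-!
Write `a = λ + πi`, `b = λ - πi`, so that `a - b = 2πi`. The Möbius map `M w = -(w - 1)/(a w - b)`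
is inverted explicitly: `M w = s` exactly at `w = (1 + b s)/(1 + a s)`. For an integer `σ` the
factor `exp (2πi M w)` is `1` there, so `w` is fixed by `g`, and the product rule collapses to
`g' w = 1 + 2πi · w · M' w`, with `M' w = (b - a)/(a w - b)^2`.
-/

open Complex

section Moebius

variable {a b s : ℂ}

lemma mul_div_one_add_mul_sub (hs : 1 + a * s ≠ 0) :
    a * ((1 + b * s) / (1 + a * s)) - b = (a - b) / (1 + a * s) := by
  field_simp
  ring

lemma div_one_add_mul_sub_one (hs : 1 + a * s ≠ 0) :
    (1 + b * s) / (1 + a * s) - 1 = -((a - b) * s) / (1 + a * s) := by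
  rw [div_sub_one hs]
  ring

lemma moebius_apply_div_one_add_mul (hab : a ≠ b) (hs : 1 + a * s ≠ 0) :
    -((1 + b * s) / (1 + a * s) - 1) / (a * ((1 + b * s) / (1 + a * s)) - b) = s := by
  rw [mul_div_one_add_mul_sub hs, div_one_add_mul_sub_one hs]
  field_simp [sub_ne_zero.mpr hab]

lemma hasDerivAt_moebius {w : ℂ} (hw : a * w - b ≠ 0) :
    HasDerivAt (fun w => -(w - 1) / (a * w - b)) ((b - a) / (a * w - b) ^ 2) w := by
  have hnum : HasDerivAt (fun w : ℂ => -(w - 1)) (-1) w := ((hasDerivAt_id w).sub_const 1).neg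
  have hden : HasDerivAt (fun w : ℂ => a * w - b) a w := by
    simpa using ((hasDerivAt_id w).const_mul a).sub_const b
  exact (hnum.div hden hw).congr_deriv (by ring)

lemma mul_moebius_deriv_div_one_add_mul (hab : a ≠ b) (hs : 1 + a * s ≠ 0) :
    (1 + b * s) / (1 + a * s) * ((b - a) / (a * ((1 + b * s) / (1 + a * s)) - b) ^ 2) =
      -((1 + b * s) * (1 + a * s)) / (a - b) := by
  rw [mul_div_one_add_mul_sub hs]
  field_simp [sub_ne_zero.mpr hab]
  ring

end Moebius

lemma HasDerivAt.mul_cexp_of_cexp_eq_one {f : ℂ → ℂ} {f' z : ℂ} (hf : HasDerivAt f f' z)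
    (hz : Complex.exp (f z) = 1) : HasDerivAt (fun w => w * Complex.exp (f w)) (1 + z * f') z :=
  ((hasDerivAt_id z).mul hf.cexp).congr_deriv (by simp [hz])

theorem stmt9_general (lam : ℂ)
    (σ : ℤ) (hσ : 1 + (lam + (Real.pi : ℂ) * Complex.I) * σ ≠ 0) :
    let pI : ℂ := (Real.pi : ℂ) * Complex.I
    let M : ℂ → ℂ := fun w => -(w - 1) / ((lam + pI) * w - (lam - pI))
    let g : ℂ → ℂ := fun w => w * Complex.exp (2 * pI * M w)
    let w' : ℂ := (1 + (lam - pI) * σ) / (1 + (lam + pI) * σ)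
    M w' = σ ∧ g w' = w' ∧
      deriv g w' = 1 - (1 + (lam - pI) * σ) * (1 + (lam + pI) * σ) := by
  intro pI M g w'
  have hab : (lam + pI) - (lam - pI) = 2 * pI := by ring
  have hpI : pI ≠ 0 := mul_ne_zero (ofReal_ne_zero.mpr Real.pi_ne_zero) I_ne_zero
  have hab_ne : lam + pI ≠ lam - pI := sub_ne_zero.mp (hab ▸ mul_ne_zero two_ne_zero hpI)
  have hM : M w' = σ := moebius_apply_div_one_add_mul hab_ne hσ
  have hexp : exp (2 * pI * M w') = 1 := by
    rw [hM, show 2 * pI * σ = σ * (2 * Real.pi * I) by ring]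
    exact exp_int_mul_two_pi_mul_I σ
  have hden : (lam + pI) * w' - (lam - pI) ≠ 0 := by
    rw [mul_div_one_add_mul_sub hσ]
    exact div_ne_zero (sub_ne_zero.mpr hab_ne) hσ
  refine ⟨hM, by simp only [g, hexp, mul_one], ?_⟩
  rw [(((hasDerivAt_moebius hden).const_mul (2 * pI)).mul_cexp_of_cexp_eq_one hexp).deriv,
    mul_left_comm, mul_moebius_deriv_div_one_add_mul hab_ne hσ, hab]
  field_simp
  ring

theorem stmt9 (lam : ℂ) (h1 : lam ≠ (Real.pi : ℂ) * Complex.I)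
    (h2 : lam ≠ -((Real.pi : ℂ) * Complex.I))
    (σ : ℤ) (hσ : 1 + (lam + (Real.pi : ℂ) * Complex.I) * σ ≠ 0) :
    let pI : ℂ := (Real.pi : ℂ) * Complex.I
    let M : ℂ → ℂ := fun w => -(w - 1) / ((lam + pI) * w - (lam - pI))
    let g : ℂ → ℂ := fun w => w * Complex.exp (2 * pI * M w)
    let w' : ℂ := (1 + (lam - pI) * σ) / (1 + (lam + pI) * σ)
    M w' = σ ∧ g w' = w' ∧
      deriv g w' = 1 - (1 + (lam - pI) * σ) * (1 + (lam + pI) * σ) :=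
  stmt9_general lam σ hσ
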